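/- Let L and M be bounded distributive lattices and h : L → M a bounded lattice homomorphism (preserving ⊔, ⊓, the least element 0 and the greatest element 1). Then for every prime congruence ψ of M, h*(ψ) is a prime congruence of L, and for every maximal congruence ψ of M, h*(ψ) is a maximal congruence of L. -/

import Mathlib

/-- A lattice congruence: an equivalence relation compatible with `⊔` and `⊓`. -/
def IsLatCon {L : Type*} [Lattice L] (θ : L → L → Prop) : Prop :=
  Equivalence θ ∧ (∀ a b c d, θ a b → θ c d → θ (a ⊔ c) (b ⊔ d)) ∧
    (∀ a b c d, θ a b → θ c d → θ (a ⊓ c) (b ⊓ d))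

/-- A maximal congruence: a maximal element of the proper congruences under inclusion. -/
def IsMaxCon {L : Type*} [Lattice L] (θ : L → L → Prop) : Prop :=
  IsLatCon θ ∧ θ ≠ (fun _ _ => True) ∧
    ∀ φ : L → L → Prop, IsLatCon φ → (∀ a b, θ a b → φ a b) →
      φ = θ ∨ φ = (fun _ _ => True)

/-- A prime congruence: proper, and `α ∩ β ⊆ θ` implies `α ⊆ θ` or `β ⊆ θ`. -/
def IsPrimeCon {L : Type*} [Lattice L] (θ : L → L → Prop) : Prop :=
  IsLatCon θ ∧ θ ≠ (fun _ _ => True) ∧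
    ∀ α β : L → L → Prop, IsLatCon α → IsLatCon β →
      (∀ a b, α a b → β a b → θ a b) →
      (∀ a b, α a b → θ a b) ∨ (∀ a b, β a b → θ a b)

/-! In a distributive lattice, the join of a congruence `θ` with the principal congruence of
`p ≤ q` is explicit: `x ≡ y` iff `x ⊓ p ≡ y ⊓ p` and `x ⊔ q ≡ y ⊔ q` modulo `θ`. With this,
primeness and maximality of a congruence become conditions on elements: `θ` is prime iff it
relates `a, b` or `c, d` whenever it relates a certain pair built from `a, b, c, d` by `⊔` and
`⊓` (the generators of `con(a, b) ∩ con(c, d)`), and maximal iff every pair `a, b` it does not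
relate satisfies `⊥ ≡ a ⊓ b` and `a ⊔ b ≡ ⊤`. Bounded lattice homomorphisms reflect both
conditions. -/

open Function

section

variable {L M : Type*}

/-- For `p ≤ q` in a distributive lattice, the join of `θ` with the principal congruence of
`(p, q)`; for `θ = (· = ·)` it is that principal congruence. -/
def joinPrincipal [Lattice L] (θ : L → L → Prop) (p q x y : L) : Prop :=
  θ (x ⊓ p) (y ⊓ p) ∧ θ (x ⊔ q) (y ⊔ q)

lemma joinPrincipal_inf_sup [Lattice L] {θ : L → L → Prop} (hθ : ∀ x, θ x x) (a b : L) :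
    joinPrincipal θ (a ⊓ b) (a ⊔ b) a b := by
  constructor
  · rw [inf_left_idem, inf_comm a b, inf_left_idem]
    exact hθ _
  · rw [sup_left_idem, sup_comm a b, sup_left_idem]
    exact hθ _

lemma joinPrincipal_eq_inter [DistribLattice L] {a b c d x y : L}
    (hab : joinPrincipal (· = ·) a b x y) (hcd : joinPrincipal (· = ·) c d x y) :
    joinPrincipal (· = ·) ((a ⊔ c) ⊓ (b ⊓ d)) (b ⊓ d) x y := by
  obtain ⟨ha, hb⟩ := hab
  obtain ⟨hc, hd⟩ := hcd
  constructor
  · change x ⊓ _ = y ⊓ _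
    rw [← inf_assoc x, ← inf_assoc y, inf_sup_left x, inf_sup_left y, ha, hc]
  · rw [sup_inf_left, sup_inf_left, hb, hd]

namespace IsLatCon

section Lattice

variable [Lattice L] {θ : L → L → Prop} {a b c d : L}

lemma refl (hθ : IsLatCon θ) (a : L) : θ a a := hθ.1.refl a

lemma symm (hθ : IsLatCon θ) (hab : θ a b) : θ b a := hθ.1.symm hab

lemma trans (hθ : IsLatCon θ) (hab : θ a b) (hbc : θ b c) : θ a c := hθ.1.trans hab hbc

lemma sup (hθ : IsLatCon θ) (hab : θ a b) (hcd : θ c d) : θ (a ⊔ c) (b ⊔ d) :=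
  hθ.2.1 _ _ _ _ hab hcd

lemma inf (hθ : IsLatCon θ) (hab : θ a b) (hcd : θ c d) : θ (a ⊓ c) (b ⊓ d) :=
  hθ.2.2 _ _ _ _ hab hcd

lemma inf_sup (hθ : IsLatCon θ) (hab : θ a b) : θ (a ⊓ b) (a ⊔ b) := by
  have hinf : θ (a ⊓ b) b := by simpa using hθ.inf hab (hθ.refl b)
  have hsup : θ (a ⊔ b) b := by simpa using hθ.sup hab (hθ.refl b)
  exact hθ.trans hinf (hθ.symm hsup)

lemma rel_inter (hθ : IsLatCon θ) (hab : θ a b) (c d : L) :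
    θ ((a ⊓ b ⊔ c ⊓ d) ⊓ ((a ⊔ b) ⊓ (c ⊔ d))) ((a ⊔ b) ⊓ (c ⊔ d)) := by
  have h := hθ.inf (hθ.sup (hθ.inf_sup hab) (hθ.refl (c ⊓ d))) (hθ.refl ((a ⊔ b) ⊓ (c ⊔ d)))
  rwa [inf_eq_right (a := a ⊔ b ⊔ c ⊓ d) |>.2 (inf_le_left.trans le_sup_left)] at h

lemma joinPrincipal_of_rel (hθ : IsLatCon θ) {x y : L} (hxy : θ x y) (p q : L) :
    joinPrincipal θ p q x y :=
  ⟨hθ.inf hxy (hθ.refl p), hθ.sup hxy (hθ.refl q)⟩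

lemma comap [Lattice M] {ψ : M → M → Prop} (hψ : IsLatCon ψ) (f : LatticeHom L M) :
    IsLatCon (ψ on f) := by
  refine ⟨⟨fun _ => hψ.refl _, hψ.symm, hψ.trans⟩, fun _ _ _ _ hab hcd => ?_,
    fun _ _ _ _ hab hcd => ?_⟩
  · simpa only [onFun, map_sup] using hψ.sup hab hcd
  · simpa only [onFun, map_inf] using hψ.inf hab hcd

end Lattice

section BoundedOrder

variable [Lattice L] [BoundedOrder L] {θ : L → L → Prop}

lemma eq_top_of_rel_bot_top (hθ : IsLatCon θ) (hbt : θ ⊥ ⊤) : θ = fun _ _ => True := by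
  have h (x : L) : θ x ⊤ := by simpa using hθ.sup (hθ.refl x) hbt
  funext x y
  exact eq_true (hθ.trans (h x) (hθ.symm (h y)))

lemma comap_ne_top [Lattice M] [BoundedOrder M] {ψ : M → M → Prop} (hψ : IsLatCon ψ)
    (hne : ψ ≠ fun _ _ => True) (f : BoundedLatticeHom L M) : (ψ on f) ≠ fun _ _ => True := by
  intro htop
  refine hne (hψ.eq_top_of_rel_bot_top ?_)
  simpa [onFun] using congrFun₂ htop ⊥ ⊤

end BoundedOrder

section DistribLattice

variable [DistribLattice L] {θ : L → L → Prop}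

lemma of_joinPrincipal_eq (hθ : IsLatCon θ) {p q x y : L} (hpq : θ p q)
    (hxy : joinPrincipal (· = ·) p q x y) : θ x y := by
  obtain ⟨hp, hq⟩ := hxy
  have hx : θ x (x ⊔ y ⊓ q) := by
    have h := hθ.sup (hθ.refl x) (hθ.inf (hθ.refl y) hpq)
    rwa [← hp, sup_inf_self] at h
  have hy : θ y (y ⊔ x ⊓ q) := by
    have h := hθ.sup (hθ.refl y) (hθ.inf (hθ.refl x) hpq)
    rwa [hp, sup_inf_self] at h
  have hxy : x ⊔ y ⊓ q = y ⊔ x ⊓ q := by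
    rw [sup_inf_left, sup_inf_left, hq, sup_comm x y]
  exact hθ.trans hx (hxy ▸ hθ.symm hy)

end DistribLattice

end IsLatCon

lemma isLatCon_eq [Lattice L] : IsLatCon (fun x y : L => x = y) :=
  ⟨eq_equivalence, fun _ _ _ _ => congr_arg₂ _, fun _ _ _ _ => congr_arg₂ _⟩

lemma isLatCon_joinPrincipal [DistribLattice L] {θ : L → L → Prop} (hθ : IsLatCon θ) (p q : L) :
    IsLatCon (joinPrincipal θ p q) := by
  refine ⟨⟨fun x => ⟨hθ.refl _, hθ.refl _⟩, fun h => ⟨hθ.symm h.1, hθ.symm h.2⟩,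
    fun h₁ h₂ => ⟨hθ.trans h₁.1 h₂.1, hθ.trans h₁.2 h₂.2⟩⟩, ?_, ?_⟩
  · rintro x y u v ⟨hp, hq⟩ ⟨hp', hq'⟩
    refine ⟨?_, ?_⟩
    · simpa only [inf_sup_right] using hθ.sup hp hp'
    · rw [sup_sup_distrib_right x, sup_sup_distrib_right y]
      exact hθ.sup hq hq'
  · rintro x y u v ⟨hp, hq⟩ ⟨hp', hq'⟩
    refine ⟨?_, ?_⟩
    · rw [inf_inf_distrib_right x, inf_inf_distrib_right y]
      exact hθ.inf hp hp'
    · simpa only [sup_inf_right] using hθ.inf hq hq'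

theorem isPrimeCon_of_rel_or_rel [Lattice L] {θ : L → L → Prop} (hθ : IsLatCon θ)
    (hne : θ ≠ fun _ _ => True)
    (h : ∀ a b c d : L, θ ((a ⊓ b ⊔ c ⊓ d) ⊓ ((a ⊔ b) ⊓ (c ⊔ d))) ((a ⊔ b) ⊓ (c ⊔ d)) →
      θ a b ∨ θ c d) : IsPrimeCon θ := by
  refine ⟨hθ, hne, fun α β hα hβ hαβ => ?_⟩
  by_contra! hcon
  obtain ⟨⟨a, b, hab, hnab⟩, ⟨c, d, hcd, hncd⟩⟩ := hcon
  have hβ' := hβ.rel_inter hcd a b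
  rw [sup_comm (c ⊓ d), inf_comm (c ⊔ d)] at hβ'
  exact (h a b c d (hαβ _ _ (hα.rel_inter hab c d) hβ')).elim hnab hncd

theorem IsPrimeCon.rel_or_rel [DistribLattice L] {θ : L → L → Prop} (hθ : IsPrimeCon θ)
    {a b c d : L} (h : θ ((a ⊓ b ⊔ c ⊓ d) ⊓ ((a ⊔ b) ⊓ (c ⊔ d))) ((a ⊔ b) ⊓ (c ⊔ d))) :
    θ a b ∨ θ c d := by
  obtain ⟨hθ, -, hprime⟩ := hθ
  have hinter (x y : L) (hab : joinPrincipal (· = ·) (a ⊓ b) (a ⊔ b) x y)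
      (hcd : joinPrincipal (· = ·) (c ⊓ d) (c ⊔ d) x y) : θ x y :=
    hθ.of_joinPrincipal_eq h (joinPrincipal_eq_inter hab hcd)
  exact (hprime _ _ (isLatCon_joinPrincipal isLatCon_eq _ _)
    (isLatCon_joinPrincipal isLatCon_eq _ _) hinter).imp
    (fun hsub => hsub a b (joinPrincipal_inf_sup (fun _ => rfl) a b))
    (fun hsub => hsub c d (joinPrincipal_inf_sup (fun _ => rfl) c d))

theorem IsPrimeCon.comap [Lattice L] [BoundedOrder L] [DistribLattice M] [BoundedOrder M]
    {ψ : M → M → Prop} (hψ : IsPrimeCon ψ) (f : BoundedLatticeHom L M) : IsPrimeCon (ψ on f) :=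
  isPrimeCon_of_rel_or_rel (hψ.1.comap f.toLatticeHom) (hψ.1.comap_ne_top hψ.2.1 f)
    fun _ _ _ _ h => hψ.rel_or_rel (by simpa only [onFun, map_sup, map_inf] using h)

theorem isMaxCon_of_rel_bot_inf_and_rel_sup_top [Lattice L] [BoundedOrder L]
    {θ : L → L → Prop} (hθ : IsLatCon θ) (hne : θ ≠ fun _ _ => True)
    (h : ∀ a b, ¬θ a b → θ ⊥ (a ⊓ b) ∧ θ (a ⊔ b) ⊤) : IsMaxCon θ := by
  refine ⟨hθ, hne, fun φ hφ hθφ => ?_⟩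
  by_cases hφθ : ∀ a b, φ a b → θ a b
  · exact Or.inl (funext₂ fun a b => propext ⟨hφθ a b, hθφ a b⟩)
  push Not at hφθ
  obtain ⟨a, b, hab, hnab⟩ := hφθ
  obtain ⟨hbot, htop⟩ := h a b hnab
  exact Or.inr (hφ.eq_top_of_rel_bot_top
    (hφ.trans (hθφ _ _ hbot) (hφ.trans (hφ.inf_sup hab) (hθφ _ _ htop))))

theorem IsMaxCon.rel_bot_inf_and_rel_sup_top [DistribLattice L] [BoundedOrder L]
    {θ : L → L → Prop} (hθ : IsMaxCon θ) {a b : L} (hab : ¬θ a b) :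
    θ ⊥ (a ⊓ b) ∧ θ (a ⊔ b) ⊤ := by
  obtain ⟨hθ, -, hmax⟩ := hθ
  rcases hmax _ (isLatCon_joinPrincipal hθ (a ⊓ b) (a ⊔ b))
    (fun _ _ hxy => hθ.joinPrincipal_of_rel hxy _ _) with h | h
  · exact absurd (h ▸ joinPrincipal_inf_sup hθ.refl a b) hab
  · have hbt : joinPrincipal θ (a ⊓ b) (a ⊔ b) ⊥ ⊤ := by rw [h]; trivial
    simpa only [joinPrincipal, bot_inf_eq, top_inf_eq, bot_sup_eq, top_sup_eq] using hbt

theorem IsMaxCon.comap [Lattice L] [BoundedOrder L] [DistribLattice M] [BoundedOrder M]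
    {ψ : M → M → Prop} (hψ : IsMaxCon ψ) (f : BoundedLatticeHom L M) : IsMaxCon (ψ on f) :=
  isMaxCon_of_rel_bot_inf_and_rel_sup_top (hψ.1.comap f.toLatticeHom)
    (hψ.1.comap_ne_top hψ.2.1 f) fun _ _ hab => by
      simpa only [onFun, map_bot, map_top, map_inf, map_sup] using
        hψ.rel_bot_inf_and_rel_sup_top hab

end

/-- For a bounded lattice homomorphism between bounded distributive
lattices, the pullback of a prime congruence is prime and the pullback of a maximal
congruence is maximal. -/
theorem pullback_primeCon_maxCon_boundedDistrib {L M : Type*}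
    [DistribLattice L] [BoundedOrder L] [DistribLattice M] [BoundedOrder M] (h : L → M)
    (hsup : ∀ a b, h (a ⊔ b) = h a ⊔ h b) (hinf : ∀ a b, h (a ⊓ b) = h a ⊓ h b)
    (hbot : h ⊥ = ⊥) (htop : h ⊤ = ⊤) :
    (∀ ψ : M → M → Prop, IsPrimeCon ψ → IsPrimeCon (fun a b : L => ψ (h a) (h b))) ∧
    (∀ ψ : M → M → Prop, IsMaxCon ψ → IsMaxCon (fun a b : L => ψ (h a) (h b))) := by
  let f : BoundedLatticeHom L M :=
    { toFun := h, map_sup' := hsup, map_inf' := hinf, map_top' := htop, map_bot' := hbot }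
  exact ⟨fun ψ hψ => hψ.comap f, fun ψ hψ => hψ.comap f⟩
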